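/- arXiv:2009.11453 — 5 statements merged into one kernel-verified Lean document; each statement's English description precedes it below -/
import Mathlib

section
/- Let x ≥ 3 be an integer, n ≥ 1 an integer, 2 ≤ z ≤ x−2 an integer, and t_h, t_1, ..., t_x positive reals with t_h < t_1. Then (1+n)^{x-2}·t_h + Σ_{j=1}^{z-1} (1+n)^{x-2-j}·t_j + Σ_{j=z+1}^{x-1} (1+n)^{x-1-j}·t_j < Σ_{j=1}^{x} (1+n)^{x-j}·t_j. -/
/-!
Write `a = 1 + n ≥ 2` and `H` for the weighted sum of `t_1, …, t_{x-1}` with weights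
`a^{x-1-j}`. Every term on the left is at most the corresponding term of `H`, except
`a^{x-2} t_h`, which is smaller than the first term `a^{x-2} t_1` of `H`; so the left side is
below `2H`. The right side is `a H + t_x` by Horner's rule, and `a ≥ 2`.
-/

open Finset

/-- Time to repair nodes with base times `t 1, …, t m` in this order, where `a = 1 + n`. -/
def repairTime {R : Type*} [CommSemiring R] (a : R) (t : ℕ → R) (m : ℕ) : R :=
  ∑ j ∈ Icc 1 m, a ^ (m - j) * t j

section

variable {R : Type*} [CommSemiring R] (a : R) (t : ℕ → R)

theorem repairTime_succ (m : ℕ) : repairTime a t (m + 1) = a * repairTime a t m + t (m + 1) := by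
  rw [repairTime, sum_Icc_succ_top (by omega), repairTime, mul_sum, Nat.sub_self, pow_zero,
    one_mul]
  congr 1
  refine sum_congr rfl fun j hj => ?_
  rw [mem_Icc] at hj
  rw [← mul_assoc, ← pow_succ', show m - j + 1 = m + 1 - j by omega]

variable [PartialOrder R] [IsOrderedRing R] {a t}

theorem pow_mul_le_repairTime {m j : ℕ} (ha : 0 ≤ a) (ht : ∀ i ∈ Icc 1 m, 0 ≤ t i)
    (hj : j ∈ Icc 1 m) : a ^ (m - j) * t j ≤ repairTime a t m :=
  single_le_sum (f := fun i => a ^ (m - i) * t i)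
    (fun i hi => mul_nonneg (pow_nonneg ha _) (ht i hi)) hj

theorem sum_skip_le_repairTime {m z : ℕ} (ha : 1 ≤ a) (ht : ∀ i ∈ Icc 1 m, 0 ≤ t i)
    (hz : z ≤ m + 1) :
    ∑ j ∈ Icc 1 (z - 1), a ^ (m - 1 - j) * t j + ∑ j ∈ Icc (z + 1) m, a ^ (m - j) * t j
      ≤ repairTime a t m := by
  have hdisj : Disjoint (Icc 1 (z - 1)) (Icc (z + 1) m) :=
    disjoint_left.2 fun j h₁ h₂ => by simp only [mem_Icc] at h₁ h₂; omega
  have hsub : Icc 1 (z - 1) ∪ Icc (z + 1) m ⊆ Icc 1 m := fun j hj => by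
    simp only [mem_union, mem_Icc] at hj ⊢; omega
  calc ∑ j ∈ Icc 1 (z - 1), a ^ (m - 1 - j) * t j + ∑ j ∈ Icc (z + 1) m, a ^ (m - j) * t j
      ≤ ∑ j ∈ Icc 1 (z - 1), a ^ (m - j) * t j + ∑ j ∈ Icc (z + 1) m, a ^ (m - j) * t j := by
        gcongr with j hj
        · exact ht j (hsub (mem_union_left _ hj))
        · omega
    _ = ∑ j ∈ Icc 1 (z - 1) ∪ Icc (z + 1) m, a ^ (m - j) * t j := (sum_union hdisj).symm
    _ ≤ repairTime a t m :=
        sum_le_sum_of_subset_of_nonneg hsub fun i hi _ =>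
          mul_nonneg (pow_nonneg (zero_le_one.trans ha) _) (ht i hi)

end

theorem stmt5_general (n x z : ℕ) (hn : 1 ≤ n) (hx : 3 ≤ x) (hzx : z ≤ x - 2)
    (th : ℝ) (t : ℕ → ℝ) (ht : ∀ j ∈ Finset.Icc 1 x, 0 < t j)
    (h : th < t 1) :
    (1 + n : ℝ) ^ (x - 2) * th + (∑ j ∈ Finset.Icc 1 (z - 1), (1 + n : ℝ) ^ (x - 2 - j) * t j)
      + (∑ j ∈ Finset.Icc (z + 1) (x - 1), (1 + n : ℝ) ^ (x - 1 - j) * t j)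
      < ∑ j ∈ Finset.Icc 1 x, (1 + n : ℝ) ^ (x - j) * t j := by
  set a : ℝ := 1 + n
  have ha : 2 ≤ a := by simp only [a]; norm_cast; omega
  have ht' : ∀ j ∈ Icc 1 (x - 1), 0 ≤ t j := fun j hj =>
    (ht j (Icc_subset_Icc_right (Nat.sub_le x 1) hj)).le
  have hhead : a ^ (x - 2) * t 1 ≤ repairTime a t (x - 1) := by
    simpa only [Nat.sub_sub] using
      pow_mul_le_repairTime (by positivity) ht' (mem_Icc.2 ⟨le_rfl, by omega⟩)
  have hskip := sum_skip_le_repairTime (a := a) (t := t) (by linarith) ht'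
    (show z ≤ x - 1 + 1 by omega)
  rw [Nat.sub_sub] at hskip
  have hhorner : repairTime a t x = a * repairTime a t (x - 1) + t x := by
    simpa only [Nat.sub_add_cancel (by omega : 1 ≤ x)] using repairTime_succ a t (x - 1)
  have hth : a ^ (x - 2) * th < a ^ (x - 2) * t 1 := mul_lt_mul_of_pos_left h (by positivity)
  have hH : 0 ≤ repairTime a t (x - 1) :=
    (mul_pos (by positivity) (ht 1 (mem_Icc.2 ⟨le_rfl, by omega⟩))).le.trans hhead
  have hdouble : 2 * repairTime a t (x - 1) ≤ a * repairTime a t (x - 1) :=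
    mul_le_mul_of_nonneg_right ha hH
  have htx : 0 < t x := ht x (mem_Icc.2 ⟨by omega, le_rfl⟩)
  change _ < repairTime a t x
  linarith

theorem stmt5 (n x z : ℕ) (hn : 1 ≤ n) (hx : 3 ≤ x) (hz : 2 ≤ z) (hzx : z ≤ x - 2)
    (th : ℝ) (t : ℕ → ℝ) (hth : 0 < th) (ht : ∀ j ∈ Finset.Icc 1 x, 0 < t j)
    (h : th < t 1) :
    (1 + n : ℝ) ^ (x - 2) * th + (∑ j ∈ Finset.Icc 1 (z - 1), (1 + n : ℝ) ^ (x - 2 - j) * t j)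
      + (∑ j ∈ Finset.Icc (z + 1) (x - 1), (1 + n : ℝ) ^ (x - 1 - j) * t j)
      < ∑ j ∈ Finset.Icc 1 x, (1 + n : ℝ) ^ (x - j) * t j :=
  stmt5_general n x z hn hx hzx th t ht h
end

section
/- Let n ≥ 1 and let E_1, ..., E_x be defined from initial health values v_1, ..., v_x ∈ (0,1) by E_1 = v_1 and E_k = v_k − n·Σ_{j=2}^{k}(1 − E_{j-1}) for k ≥ 2. Then E_k = n(1+n)^{k-2}·v_1 + n(1+n)^{k-3}·v_2 + ... + n·v_{k-1} + v_k − n·Σ_{j=0}^{k-2}(1+n)^j for all k ∈ {2, ..., x}. -/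
/-!
Subtracting the defining relations of `E (k + 1)` and `E k` turns the cumulative repair deficit
into the first-order linear recurrence `E (k + 1) = (1 + n) E k + v (k + 1) - v k - n`, whose
solution from `E 1 = v 1` is the stated closed form.
-/

open Finset

section LinearRecurrence

variable {R : Type*} [CommRing R]

theorem sum_Icc_one_pow_sub_mul_succ (r : R) (f : ℕ → R) (m : ℕ) :
    ∑ j ∈ Icc 1 (m + 1), r ^ (m + 1 - j) * f j
      = r * ∑ j ∈ Icc 1 m, r ^ (m - j) * f j + f (m + 1) := by
  rw [sum_Icc_succ_top (by omega), Nat.sub_self, pow_zero, one_mul, mul_sum]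
  congr 1
  refine sum_congr rfl fun j hj => ?_
  rw [show m + 1 - j = m - j + 1 by grind, pow_succ']
  ring

theorem recurrence_of_cumulative_deficit (c : R) (v E : ℕ → R) (x : ℕ) (hE1 : E 1 = v 1)
    (hErec : ∀ k ∈ Icc 2 x, E k = v k - c * ∑ j ∈ Icc 2 k, (1 - E (j - 1)))
    (k : ℕ) (hk : 1 ≤ k) (hkx : k + 1 ≤ x) :
    E (k + 1) = (1 + c) * E k + v (k + 1) - v k - c := by
  have deficit : c * ∑ j ∈ Icc 2 k, (1 - E (j - 1)) = v k - E k := by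
    rcases hk.eq_or_lt with rfl | hk
    · simp [hE1]
    · rw [hErec k (mem_Icc.mpr ⟨hk, by omega⟩)]
      ring
  rw [hErec (k + 1) (mem_Icc.mpr ⟨by omega, hkx⟩), sum_Icc_succ_top (by omega),
    Nat.add_sub_cancel, mul_add, deficit]
  ring

theorem eq_closedForm_of_recurrence (c : R) (v E : ℕ → R) (x : ℕ) (hE1 : E 1 = v 1)
    (hstep : ∀ k, 1 ≤ k → k + 1 ≤ x → E (k + 1) = (1 + c) * E k + v (k + 1) - v k - c)
    (m : ℕ) (hm : m + 1 ≤ x) :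
    E (m + 1) = c * ∑ j ∈ Icc 1 m, (1 + c) ^ (m - j) * v j + v (m + 1)
      - c * ∑ j ∈ range m, (1 + c) ^ j := by
  induction m with
  | zero => simp [hE1]
  | succ m ih =>
    rw [hstep (m + 1) (by omega) hm, ih (by omega), sum_Icc_one_pow_sub_mul_succ, geom_sum_succ]
    ring

end LinearRecurrence

theorem stmt7_general (n x : ℕ) (v E : ℕ → ℝ)
    (hE1 : E 1 = v 1)
    (hErec : ∀ k ∈ Finset.Icc 2 x, E k = v k - n * ∑ j ∈ Finset.Icc 2 k, (1 - E (j - 1))) :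
    ∀ k ∈ Finset.Icc 2 x,
      E k = (∑ j ∈ Finset.Icc 1 (k - 1), n * (1 + n : ℝ) ^ (k - 1 - j) * v j) + v k
        - n * ∑ j ∈ Finset.range (k - 1), (1 + n : ℝ) ^ j := by
  intro k hk
  obtain ⟨m, rfl⟩ : ∃ m, k = m + 1 := ⟨k - 1, by grind⟩
  have hstep := recurrence_of_cumulative_deficit (n : ℝ) v E x hE1 hErec
  rw [eq_closedForm_of_recurrence (n : ℝ) v E x hE1 hstep m (by grind),
    Nat.add_sub_cancel, mul_sum]
  simp only [mul_assoc]

theorem stmt7 (n x : ℕ) (hn : 1 ≤ n) (v E : ℕ → ℝ)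
    (hv : ∀ j ∈ Finset.Icc 1 x, v j ∈ Set.Ioo (0 : ℝ) 1)
    (hE1 : E 1 = v 1)
    (hErec : ∀ k ∈ Finset.Icc 2 x, E k = v k - n * ∑ j ∈ Finset.Icc 2 k, (1 - E (j - 1))) :
    ∀ k ∈ Finset.Icc 2 x,
      E k = (∑ j ∈ Finset.Icc 1 (k - 1), n * (1 + n : ℝ) ^ (k - 1 - j) * v j) + v k
        - n * ∑ j ∈ Finset.range (k - 1), (1 + n : ℝ) ^ j :=
  stmt7_general n x v E hE1 hErec
end

section
/- Let n ≥ 1 and x ≥ 2. For initial healths v_1,...,v_x ∈ (0,1), the total repair time T' = Σ_{k=1}^{x} (1−E_k)/Δ_inc (with E_k as the health of the k-th node when reached, E_1 = v_1, E_k = v_k − n·Σ_{j=2}^{k}(1−E_{j-1})) is minimized over all orderings of the x nodes by sorting them in decreasing order of initial health. Formally: for any permutation σ of {1,...,x}, if v_{σ(1)} ≥ v_{σ(2)} ≥ ... ≥ v_{σ(x)} fails, then the sorted order yields a total time less than or equal to that of σ. -/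
/-- `(E_k, S_k)` where `E_k` is the health of the `k`-th targeted node when reached
(`E_1 = w 1`, `E_k = w k - n·∑_{j=2}^{k}(1 - E_{j-1})`) and `S_k = ∑_{j=1}^{k}(1 - E_j)`. -/
noncomputable def repairES (n : ℕ) (w : ℕ → ℝ) : ℕ → ℝ × ℝ
  | 0 => (0, 0)
  | k + 1 =>
    let s := (repairES n w k).2
    let e := w (k + 1) - n * s
    (e, s + (1 - e))

/-- Health of the `k`-th targeted node when it is reached. -/
noncomputable def repairE (n : ℕ) (w : ℕ → ℝ) (k : ℕ) : ℝ := (repairES n w k).1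

/-- Total repair time `T' = ∑_{k=1}^{x} (1 - E_k)/Δ_inc`. -/
noncomputable def totalRepairTime (n x : ℕ) (Δinc : ℝ) (w : ℕ → ℝ) : ℝ :=
  ∑ k ∈ Finset.Icc 1 x, (1 - repairE n w k) / Δinc

/-!
Unrolling the recursion, `S_x = ∑ₖ (1 - E_k) = ∑ₖ (n+1)^(x-k) (1 - w k)`, so the total repair time
is `(∑ₖ cₖ - ∑ₖ cₖ w k) / Δ_inc` with weights `cₖ = (n+1)^(x-k)` decreasing in `k`. By the
rearrangement inequality `∑ₖ cₖ w k` is largest when the healths are also decreasing in `k`.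
-/

open Finset Equiv

theorem Finset.exists_perm_eq_comp_of_map_val_eq {α β : Type*} (s : Finset α) {f g : α → β}
    (h : s.val.map f = s.val.map g) :
    ∃ σ : Perm α, {x | σ x ≠ x} ⊆ s ∧ ∀ i ∈ s, f i = g (σ i) := by
  classical
  have card_fiber (φ : α → β) (b : β) :
      Fintype.card {i : s // φ i = b} = (s.val.map φ).count b := by
    rw [Multiset.count_map, ← filter_val, card_val, Fintype.card_subtype, univ_eq_attach]
    simp only [eq_comm (a := b)]
    rw [filter_attach (fun a => φ a = b), card_map, card_attach]
  -- equal multisets of values give equinumerous fibres, which can then be matched bijectively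
  let e : Perm s := ofFiberEquiv fun b =>
    Fintype.equivOfCardEq (by rw [card_fiber, card_fiber, h] :
      Fintype.card {i : s // f i = b} = Fintype.card {i : s // g i = b})
  refine ⟨Perm.ofSubtype e, fun x hx => ?_, fun i hi => ?_⟩
  · by_contra hxs
    exact hx (Perm.ofSubtype_apply_of_not_mem e hxs)
  · rw [Perm.ofSubtype_apply_of_mem e hi]
    exact (ofFiberEquiv_map (f := fun i : s => f i) (g := fun i : s => g i) _ ⟨i, hi⟩).symm

theorem MonovaryOn.sum_mul_le_sum_mul_of_map_val_eq {ι α : Type*} [CommRing α] [LinearOrder α]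
    [IsStrictOrderedRing α] {s : Finset ι} {c f g : ι → α} (hcg : MonovaryOn c g s)
    (h : s.val.map f = s.val.map g) : ∑ i ∈ s, c i * f i ≤ ∑ i ∈ s, c i * g i := by
  obtain ⟨σ, hσ, hfg⟩ := s.exists_perm_eq_comp_of_map_val_eq h
  calc ∑ i ∈ s, c i * f i = ∑ i ∈ s, c i * g (σ i) := sum_congr rfl fun i hi => by rw [hfg i hi]
    _ ≤ ∑ i ∈ s, c i * g i := hcg.sum_mul_comp_perm_le_sum_mul hσ

theorem repairES_snd_eq_sum (n : ℕ) (w : ℕ → ℝ) (m : ℕ) :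
    (repairES n w m).2 = ∑ k ∈ Icc 1 m, ((n : ℝ) + 1) ^ (m - k) * (1 - w k) := by
  induction m with
  | zero => simp [repairES]
  | succ m ih =>
    have sum_succ : ∑ k ∈ Icc 1 m, ((n : ℝ) + 1) ^ (m + 1 - k) * (1 - w k)
        = ((n : ℝ) + 1) * ∑ k ∈ Icc 1 m, ((n : ℝ) + 1) ^ (m - k) * (1 - w k) := by
      rw [mul_sum]
      refine sum_congr rfl fun k hk => ?_
      rw [Nat.sub_add_comm (mem_Icc.1 hk).2, pow_succ]
      ring
    rw [← insert_Icc_right_eq_Icc_add_one (by omega), sum_insert (by simp), sum_succ, ← ih]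
    simp only [repairES, Nat.sub_self, pow_zero]
    ring

theorem sum_one_sub_repairE (n : ℕ) (w : ℕ → ℝ) (m : ℕ) :
    ∑ k ∈ Icc 1 m, (1 - repairE n w k) = (repairES n w m).2 := by
  induction m with
  | zero => simp [repairES]
  | succ m ih =>
    rw [← insert_Icc_right_eq_Icc_add_one (by omega), sum_insert (by simp), ih]
    simp only [repairE, repairES]
    ring

theorem totalRepairTime_eq (n x : ℕ) (Δinc : ℝ) (w : ℕ → ℝ) :
    totalRepairTime n x Δinc w = ((∑ k ∈ Icc 1 x, ((n : ℝ) + 1) ^ (x - k))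
      - ∑ k ∈ Icc 1 x, ((n : ℝ) + 1) ^ (x - k) * w k) / Δinc := by
  rw [totalRepairTime, ← sum_div, sum_one_sub_repairE, repairES_snd_eq_sum, ← sum_sub_distrib]
  simp only [mul_one_sub]

theorem stmt8_general (n x : ℕ) (Δinc : ℝ) (hΔ : 0 < Δinc)
    (w w' : ℕ → ℝ)
    (hperm : Multiset.map w (Finset.Icc 1 x).val = Multiset.map w' (Finset.Icc 1 x).val)
    (hsorted : ∀ i ∈ Finset.Icc 1 x, ∀ j ∈ Finset.Icc 1 x, i ≤ j → w' j ≤ w' i) :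
    totalRepairTime n x Δinc w' ≤ totalRepairTime n x Δinc w := by
  have hweights : AntitoneOn (fun k => ((n : ℝ) + 1) ^ (x - k)) (Icc 1 x : Set ℕ) :=
    fun i _ j _ hij => pow_le_pow_right₀ (le_add_of_nonneg_left n.cast_nonneg) (by omega)
  have hrearrange := (hweights.monovaryOn hsorted).sum_mul_le_sum_mul_of_map_val_eq hperm
  rw [totalRepairTime_eq, totalRepairTime_eq]
  gcongr

theorem stmt8 (n x : ℕ) (hn : 1 ≤ n) (hx : 2 ≤ x) (Δinc : ℝ) (hΔ : 0 < Δinc)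
    (w w' : ℕ → ℝ) (hw : ∀ k ∈ Finset.Icc 1 x, w k ∈ Set.Ioo (0 : ℝ) 1)
    (hperm : Multiset.map w (Finset.Icc 1 x).val = Multiset.map w' (Finset.Icc 1 x).val)
    (hsorted : ∀ i ∈ Finset.Icc 1 x, ∀ j ∈ Finset.Icc 1 x, i ≤ j → w' j ≤ w' i) :
    totalRepairTime n x Δinc w' ≤ totalRepairTime n x Δinc w :=
  stmt8_general n x Δinc hΔ w w' hperm hsorted
end

section
/- Let y nodes with initial healths v_0^{i_1}, ..., v_0^{i_y} ∈ (0,1) and deterioration rates Δ^{i_j} > 0 all be permanently repaired by some repair sequence, where a node not targeted at a step loses its deterioration rate in health, at most one node is targeted per step, and a node permanently fails upon reaching health ≤ 0. Then there exists an ordering (a permutation) i_1, ..., i_y of these nodes such that v_0^{i_j} > (y − j)·Δ^{i_j} for every j ∈ {1, ..., y}. -/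
/-!
Order the nodes by the time `T j` at which each is first targeted. A node that is eventually
repaired can never have hit health `0`, and it cannot reach health `1` without being targeted,
so it is targeted at some time. Until then it only deteriorates, so it survives `T j` steps:
`T j * Δ j < v j`. Distinct nodes are first targeted at distinct times, hence the node that is
`k`-th in this order (counting from `0`) has `k ≤ T j`.
-/

def HealthDynamics {ι : Type*} [DecidableEq ι] (Δ inc : ι → ℝ) (u : ℕ → Option ι)
    (h : ι → ℕ → ℝ) : Prop :=
  ∀ j t, h j (t + 1) =
    if h j t = 1 then 1
    else if h j t = 0 then 0
    else if u t = some j then min 1 (h j t + inc j) else max 0 (h j t - Δ j)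

namespace HealthDynamics

variable {ι : Type*} [DecidableEq ι] {Δ inc : ι → ℝ} {u : ℕ → Option ι} {h : ι → ℕ → ℝ} {j : ι}

theorem eq_of_le {c : ℝ} (hh : HealthDynamics Δ inc u h) (hc : c = 0 ∨ c = 1) {t s : ℕ}
    (hts : t ≤ s) (ht : h j t = c) : h j s = c := by
  induction s, hts using Nat.le_induction with
  | base => exact ht
  | succ s _ ih => rcases hc with rfl | rfl <;> simp [hh j s, ih]

theorem ne_zero_of_exists_eq_one (hh : HealthDynamics Δ inc u h) (hrep : ∃ t, h j t = 1)
    (t : ℕ) : h j t ≠ 0 := by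
  obtain ⟨s, hs⟩ := hrep
  intro ht
  have h0 := hh.eq_of_le (Or.inl rfl) (le_max_left t s) ht
  have h1 := hh.eq_of_le (Or.inr rfl) (le_max_right t s) hs
  exact zero_ne_one (h0.symm.trans h1)

theorem exists_target_of_exists_eq_one (hh : HealthDynamics Δ inc u h) (hΔ : 0 ≤ Δ j)
    (hlt : h j 0 < 1) (hrep : ∃ t, h j t = 1) : ∃ t, u t = some j := by
  by_contra! hnever
  have hlt_one : ∀ t, h j t < 1 := by
    intro t
    induction t with
    | zero => exact hlt
    | succ t ih =>
      rw [hh j t, if_neg ih.ne, if_neg (hh.ne_zero_of_exists_eq_one hrep t), if_neg (hnever t)]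
      exact max_lt one_pos (by linarith)
  obtain ⟨t, ht⟩ := hrep
  exact (hlt_one t).ne ht

theorem natCast_mul_lt_of_not_targeted (hh : HealthDynamics Δ inc u h) (hΔ : 0 ≤ Δ j)
    (h0 : h j 0 ∈ Set.Ioo 0 1) (hne : ∀ t, h j t ≠ 0) {t : ℕ}
    (huntargeted : ∀ s < t, u s ≠ some j) : t * Δ j < h j 0 := by
  suffices 0 < h j t ∧ h j t = h j 0 - t * Δ j by linarith
  induction t with
  | zero => simpa using h0.1
  | succ t ih =>
    obtain ⟨-, ht⟩ := ih fun s hs => huntargeted s (hs.trans t.lt_succ_self)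
    have hlt_one : h j t ≠ 1 := by
      rw [ht]
      exact ne_of_lt (by nlinarith [h0.2, (Nat.cast_nonneg t : (0 : ℝ) ≤ t)])
    have hnext : h j (t + 1) = max 0 (h j t - Δ j) := by
      rw [hh j t, if_neg hlt_one, if_neg (hne t), if_neg (huntargeted t t.lt_succ_self)]
    -- the clamp at `0` is inactive, since otherwise the node would fail at time `t + 1`
    have hpos : 0 < h j t - Δ j := by
      by_contra! hle
      exact hne (t + 1) (hnext.trans (max_eq_left hle))
    rw [hnext, max_eq_right hpos.le, ht]
    refine ⟨by linarith, ?_⟩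
    push_cast
    ring

end HealthDynamics

theorem Fin.val_le_of_strictMono {n : ℕ} {f : Fin n → ℕ} (hf : StrictMono f) :
    ∀ i : Fin n, (i : ℕ) ≤ f i
  | ⟨0, _⟩ => Nat.zero_le _
  | ⟨k + 1, hk⟩ =>
    (Fin.val_le_of_strictMono hf ⟨k, by omega⟩).trans_lt (hf (Fin.mk_lt_mk.2 k.lt_succ_self))

theorem Fin.exists_perm_val_le_of_injective {n : ℕ} {f : Fin n → ℕ} (hf : Function.Injective f) :
    ∃ σ : Equiv.Perm (Fin n), ∀ i : Fin n, (i : ℕ) ≤ f (σ i) :=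
  ⟨Tuple.sort f, Fin.val_le_of_strictMono <|
    (Tuple.monotone_sort f).strictMono_of_injective (hf.comp (Tuple.sort f).injective)⟩

theorem stmt9_general (y : ℕ) (v Δ inc : Fin y → ℝ)
    (hv : ∀ j, v j ∈ Set.Ioo (0 : ℝ) 1) (hΔ : ∀ j, 0 < Δ j)
    (u : ℕ → Option (Fin y)) (h : Fin y → ℕ → ℝ)
    (h0 : ∀ j, h j 0 = v j)
    (hstep : ∀ j t, h j (t + 1) =
      if h j t = 1 then 1
      else if h j t = 0 then 0
      else if u t = some j then min 1 (h j t + inc j) else max 0 (h j t - Δ j))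
    (hrep : ∀ j, ∃ t, h j t = 1) :
    ∃ σ : Equiv.Perm (Fin y),
      ∀ j : Fin y, v (σ j) > ((y - 1 - (j : ℕ) : ℕ) : ℝ) * Δ (σ j) := by
  have hh : HealthDynamics Δ inc u h := hstep
  have hv0 : ∀ j, h j 0 ∈ Set.Ioo 0 1 := fun j => h0 j ▸ hv j
  have htarget : ∀ j, ∃ t, u t = some j := fun j =>
    hh.exists_target_of_exists_eq_one (hΔ j).le (hv0 j).2 (hrep j)
  let T : Fin y → ℕ := fun j => Nat.find (htarget j)
  have hT : Function.Injective T := fun a b hab => Option.some_injective _ <|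
    (Nat.find_spec (htarget a)).symm.trans ((congrArg u hab).trans (Nat.find_spec (htarget b)))
  have hsurvive : ∀ j, T j * Δ j < v j := fun j => h0 j ▸
    hh.natCast_mul_lt_of_not_targeted (hΔ j).le (hv0 j) (hh.ne_zero_of_exists_eq_one (hrep j))
      fun _ => Nat.find_min (htarget j)
  obtain ⟨σ, hσ⟩ := Fin.exists_perm_val_le_of_injective hT
  refine ⟨Fin.revPerm.trans σ, fun j => ?_⟩
  have hj : y - 1 - (j : ℕ) ≤ T (σ j.rev) := by
    simpa [Fin.val_rev, Nat.sub_sub, add_comm] using hσ j.rev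
  calc ((y - 1 - (j : ℕ) : ℕ) : ℝ) * Δ (σ j.rev) ≤ T (σ j.rev) * Δ (σ j.rev) := by
        gcongr
        exact (hΔ _).le
    _ < v (σ j.rev) := hsurvive _

theorem stmt9 (y : ℕ) (hy : 1 ≤ y) (v Δ inc : Fin y → ℝ)
    (hv : ∀ j, v j ∈ Set.Ioo (0 : ℝ) 1) (hΔ : ∀ j, 0 < Δ j) (hinc : ∀ j, 0 < inc j)
    (u : ℕ → Option (Fin y)) (h : Fin y → ℕ → ℝ)
    (h0 : ∀ j, h j 0 = v j)
    (hstep : ∀ j t, h j (t + 1) =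
      if h j t = 1 then 1
      else if h j t = 0 then 0
      else if u t = some j then min 1 (h j t + inc j) else max 0 (h j t - Δ j))
    (hrep : ∀ j, ∃ t, h j t = 1) :
    ∃ σ : Equiv.Perm (Fin y),
      ∀ j : Fin y, v (σ j) > ((y - 1 - (j : ℕ) : ℕ) : ℝ) * Δ (σ j) :=
  stmt9_general y v Δ inc hv hΔ u h h0 hstep hrep
end

section
/- In the repair model with rates Δ_dec^j = Δ_inc^j = 1/(2(2^{M}−1)+3) and initial health v_0^j = (2(2^{M}−1)+1)/(2(2^{M}−1)+3) for every node j (for a fixed positive integer M), if nodes are repaired one after another in a non-jumping sequence starting at time 0 (each node deteriorating by Δ_dec per step while waiting), then the i-th node in the sequence takes exactly 2^i time-steps to go from its current health to full health, and hence the i-th node begins being targeted at time-step 2(2^{i-1} − 1). -/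
/-! With `Δ_dec = Δ_inc = Δ` and initial gap `1 - v₀ = 2Δ`, a node that has waited `t` steps has
gap `(t + 2)Δ` and so needs `t + 2` steps. Hence `start (i+1) = 2 start i + 2` with `start 1 = 0`,
which solves to `start i = 2(2^(i-1) - 1)` and duration `start i + 2 = 2^i`. -/

lemma repair_time_eq {Δ v₀ : ℝ} (hΔ : Δ ≠ 0) (hgap : 1 - v₀ = 2 * Δ) (t : ℝ) :
    (1 - (v₀ - t * Δ)) / Δ = t + 2 := by
  rw [div_eq_iff hΔ]
  linarith

lemma eq_of_succ_eq_two_mul_add_two {s : ℕ → ℝ} (h₁ : s 1 = 0)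
    (hrec : ∀ i, 1 ≤ i → s (i + 1) = 2 * s i + 2) {i : ℕ} (hi : 1 ≤ i) :
    s i = 2 * ((2 : ℝ) ^ (i - 1) - 1) := by
  induction i, hi using Nat.le_induction with
  | base => simp [h₁]
  | succ n hn ih =>
    obtain ⟨k, rfl⟩ := Nat.exists_eq_add_of_le' hn
    rw [hrec _ hn, ih]
    simp only [Nat.add_sub_cancel, pow_succ]
    ring

lemma two_mul_two_pow_sub_one_add_three_pos (M : ℕ) : 0 < 2 * ((2 : ℝ) ^ M - 1) + 3 := by
  have : (1 : ℝ) ≤ 2 ^ M := one_le_pow₀ one_le_two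
  linarith

lemma initial_gap_eq_two_mul (M : ℕ) :
    1 - (2 * ((2 : ℝ) ^ M - 1) + 1) / (2 * ((2 : ℝ) ^ M - 1) + 3)
      = 2 * (1 / (2 * ((2 : ℝ) ^ M - 1) + 3)) := by
  have := (two_mul_two_pow_sub_one_add_three_pos M).ne'
  field_simp
  ring

theorem stmt11_general (M : ℕ) (Δ v0 : ℝ)
    (hΔ : Δ = 1 / (2 * ((2 : ℝ) ^ M - 1) + 3))
    (hv0 : v0 = (2 * ((2 : ℝ) ^ M - 1) + 1) / (2 * ((2 : ℝ) ^ M - 1) + 3))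
    (start : ℕ → ℝ) (hs1 : start 1 = 0)
    (hrec : ∀ i, 1 ≤ i → start (i + 1) = start i + (1 - (v0 - start i * Δ)) / Δ) :
    ∀ i, 1 ≤ i →
      (1 - (v0 - start i * Δ)) / Δ = 2 ^ i ∧ start i = 2 * ((2 : ℝ) ^ (i - 1) - 1) := by
  have hgap : 1 - v0 = 2 * Δ := by rw [hv0, hΔ]; exact initial_gap_eq_two_mul M
  have hΔ0 : Δ ≠ 0 := hΔ ▸ one_div_ne_zero (two_mul_two_pow_sub_one_add_three_pos M).ne'
  have hstart : ∀ i, 1 ≤ i → start i = 2 * ((2 : ℝ) ^ (i - 1) - 1) := fun i hi =>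
    eq_of_succ_eq_two_mul_add_two hs1
      (fun j hj => by rw [hrec j hj, repair_time_eq hΔ0 hgap]; ring) hi
  intro i hi
  refine ⟨?_, hstart i hi⟩
  obtain ⟨k, rfl⟩ := Nat.exists_eq_add_of_le' hi
  rw [repair_time_eq hΔ0 hgap, hstart _ hi, Nat.add_sub_cancel, pow_succ]
  ring

theorem stmt11 (M : ℕ) (hM : 1 ≤ M) (Δ v0 : ℝ)
    (hΔ : Δ = 1 / (2 * ((2 : ℝ) ^ M - 1) + 3))
    (hv0 : v0 = (2 * ((2 : ℝ) ^ M - 1) + 1) / (2 * ((2 : ℝ) ^ M - 1) + 3))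
    (start : ℕ → ℝ) (hs1 : start 1 = 0)
    (hrec : ∀ i, 1 ≤ i → start (i + 1) = start i + (1 - (v0 - start i * Δ)) / Δ) :
    ∀ i, 1 ≤ i →
      (1 - (v0 - start i * Δ)) / Δ = 2 ^ i ∧ start i = 2 * ((2 : ℝ) ^ (i - 1) - 1) :=
  stmt11_general M Δ v0 hΔ hv0 start hs1 hrec
end
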